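/- Let ξ ∈ (0,1), a ∈ (0,1/2), π, π' ∈ [a,1-a], γ, γ' be parameters of densities f̃(·;γ), f̃(·;γ') with KL divergence D̃(γ ‖ γ'). For zero-inflated densities f(x; ξπ, γ) = ξπ·f̃(x; γ) + (1-ξπ)·δ₀(x) (where f̃ puts no mass at 0), the KL divergence satisfies D((ξπ, γ) ‖ (ξπ', γ')) = D_Ber(ξπ ‖ ξπ') + ξπ·D̃(γ ‖ γ') ≥ ξ·[ ((π-π')²/(2π))·(a/(1-a))² + a·D̃(γ ‖ γ') ]. -/

import Mathlib

open MeasureTheory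

/-- Kullback–Leibler divergence between Bernoulli distributions of parameters `p` and `q`. -/
noncomputable def bernoulliKL (p q : ℝ) : ℝ :=
  p * Real.log (p / q) + (1 - p) * Real.log ((1 - p) / (1 - q))

/-- Kullback–Leibler divergence of the zero-inflated density
`f(x; ρ, g) = ρ g(x) + (1-ρ) δ₀(x)` against `f(x; ρ', g')`, where the continuous parts
`g, g'` put no mass at `0` (w.r.t. `μ` with `μ {0} = 0`):  the Dirac part contributes
`(1-ρ) log((1-ρ)/(1-ρ'))` and the continuous part `∫ ρ g log(ρ g / (ρ' g')) dμ`. -/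
noncomputable def ziKL {X : Type*} [MeasurableSpace X] (μ : Measure X)
    (ρ ρ' : ℝ) (g g' : X → ℝ) : ℝ :=
  (∫ x, ρ * g x * Real.log ((ρ * g x) / (ρ' * g' x)) ∂μ)
    + (1 - ρ) * Real.log ((1 - ρ) / (1 - ρ'))

/-!
Since `log (ρ g / (ρ' g')) = log (ρ / ρ') + log (g / g')` and `∫ g = 1`, the zero-inflated
divergence splits into the Bernoulli divergence of the mixing weights plus `ρ` times the
divergence of the continuous parts, which is nonnegative by Gibbs' inequality.

The Bernoulli part is bounded below by the second-order bound
`t log t - t + 1 ≥ (t - 1)² / (2 max t 1)`, which after scaling reads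
`x log (x / y) ≥ x - y + (x - y)² / (2 max x y)`. For `x = ξπ`, `y = ξπ'` the quadratic term is
`ξ (π - π')² / (2 max π π')`, and `π, π' ∈ [a, 1 - a]` gives `max π π' ≤ π ((1 - a) / a)²`.
-/

section

open Real InformationTheory

lemma sq_sub_one_div_two_le_klFun {t : ℝ} (ht0 : 0 < t) (ht1 : t ≤ 1) :
    (t - 1) ^ 2 / 2 ≤ klFun t := by
  -- `log u ≤ sinh (log u) = (u - u⁻¹) / 2` for `u = t⁻¹ ≥ 1`
  have hlog : log t⁻¹ ≤ (t⁻¹ - t⁻¹⁻¹) / 2 := by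
    rw [← sinh_log (inv_pos.2 ht0)]
    exact self_le_sinh_iff.2 (log_nonneg ((one_le_inv₀ ht0).2 ht1))
  rw [log_inv, inv_inv] at hlog
  have hinv : t * t⁻¹ = 1 := mul_inv_cancel₀ ht0.ne'
  rw [klFun_apply]
  nlinarith [mul_le_mul_of_nonneg_left hlog ht0.le]

lemma sq_sub_one_div_two_mul_le_klFun {t : ℝ} (ht : 1 ≤ t) :
    (t - 1) ^ 2 / (2 * t) ≤ klFun t := by
  have ht0 : 0 < t := by linarith
  have hv0 : 0 ≤ 1 - t⁻¹ := sub_nonneg.2 (inv_le_one_of_one_le₀ ht)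
  have hv1 : 1 - t⁻¹ < 1 := sub_lt_self 1 (inv_pos.2 ht0)
  -- the first two terms of `log t = -log (1 - v) = ∑ vⁿ / n` with `v = 1 - t⁻¹ ∈ [0, 1)`
  have hlog := sum_le_hasSum (Finset.range 2) (fun i _ => by positivity)
    (hasSum_pow_div_log_of_abs_lt_one (abs_lt.2 ⟨by linarith, hv1⟩))
  simp only [Finset.sum_range_succ, Finset.sum_range_zero, sub_sub_cancel, log_inv,
    neg_neg] at hlog
  norm_num at hlog
  field_simp at hlog
  rw [klFun_apply, div_le_iff₀ (by positivity)]
  linarith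

lemma sq_sub_one_div_two_max_le_klFun {t : ℝ} (ht : 0 < t) :
    (t - 1) ^ 2 / (2 * max t 1) ≤ klFun t := by
  rcases le_total t 1 with h | h
  · simpa [max_eq_right h] using sq_sub_one_div_two_le_klFun ht h
  · simpa [max_eq_left h] using sq_sub_one_div_two_mul_le_klFun h

lemma mul_log_div_eq_mul_klFun_add {x y : ℝ} (hy : y ≠ 0) :
    x * log (x / y) = y * klFun (x / y) + (x - y) := by
  rw [klFun_apply]
  field_simp
  ring

lemma sub_le_mul_log_div {x y : ℝ} (hx : 0 ≤ x) (hy : 0 < y) : x - y ≤ x * log (x / y) := by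
  rw [mul_log_div_eq_mul_klFun_add hy.ne']
  have := mul_nonneg hy.le (klFun_nonneg (div_nonneg hx hy.le))
  linarith

lemma sub_add_sq_div_two_max_le_mul_log_div {x y : ℝ} (hx : 0 < x) (hy : 0 < y) :
    x - y + (x - y) ^ 2 / (2 * max x y) ≤ x * log (x / y) := by
  rw [mul_log_div_eq_mul_klFun_add hy.ne']
  have hmax : max x y = y * max (x / y) 1 := by
    rw [mul_max_of_nonneg _ _ hy.le, mul_div_cancel₀ _ hy.ne', mul_one]
  have hsq : (x - y) ^ 2 / (2 * max x y) = y * ((x / y - 1) ^ 2 / (2 * max (x / y) 1)) := by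
    rw [hmax]
    field_simp
  have := mul_le_mul_of_nonneg_left (sq_sub_one_div_two_max_le_klFun (div_pos hx hy)) hy.le
  linarith

lemma sq_sub_div_two_max_le_bernoulliKL {p q : ℝ} (hp0 : 0 < p) (hp1 : p ≤ 1) (hq0 : 0 < q)
    (hq1 : q < 1) : (p - q) ^ 2 / (2 * max p q) ≤ bernoulliKL p q := by
  have h₁ := sub_add_sq_div_two_max_le_mul_log_div hp0 hq0
  have h₂ := sub_le_mul_log_div (sub_nonneg.2 hp1) (sub_pos.2 hq1)
  unfold bernoulliKL
  linarith

lemma integral_mul_log_div_nonneg {X : Type*} [MeasurableSpace X] {μ : Measure X}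
    {g g' : X → ℝ} (hg : ∀ x, 0 ≤ g x) (hg' : ∀ x, 0 < g' x) (hgi : Integrable g μ)
    (hg'i : Integrable g' μ) (hmass : ∫ x, g' x ∂μ ≤ ∫ x, g x ∂μ) :
    0 ≤ ∫ x, g x * log (g x / g' x) ∂μ := by
  by_cases hint : Integrable (fun x => g x * log (g x / g' x)) μ
  · calc 0 ≤ ∫ x, g x - g' x ∂μ := by rw [integral_sub hgi hg'i]; linarith
      _ ≤ ∫ x, g x * log (g x / g' x) ∂μ :=
        integral_mono (hgi.sub hg'i) hint fun x => sub_le_mul_log_div (hg x) (hg' x)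
  · rw [integral_undef hint]

lemma ziKL_eq_bernoulliKL_add {X : Type*} [MeasurableSpace X] {μ : Measure X} {ρ ρ' : ℝ}
    {g g' : X → ℝ} (hρ : ρ ≠ 0) (hρ' : ρ' ≠ 0) (hg : ∀ x, g x ≠ 0) (hg' : ∀ x, g' x ≠ 0)
    (hg1 : ∫ x, g x ∂μ = 1) (hint : Integrable (fun x => g x * log (g x / g' x)) μ) :
    ziKL μ ρ ρ' g g' = bernoulliKL ρ ρ' + ρ * ∫ x, g x * log (g x / g' x) ∂μ := by
  have hgi : Integrable g μ := .of_integral_ne_zero (by rw [hg1]; exact one_ne_zero)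
  have hsplit : (fun x => ρ * g x * log (ρ * g x / (ρ' * g' x)))
      = fun x => ρ * log (ρ / ρ') * g x + ρ * (g x * log (g x / g' x)) := by
    funext x
    rw [← div_mul_div_comm, log_mul (div_ne_zero hρ hρ') (div_ne_zero (hg x) (hg' x))]
    ring
  rw [ziKL, bernoulliKL, hsplit, integral_add (hgi.const_mul _) (hint.const_mul _),
    integral_const_mul, integral_const_mul, hg1]
  ring

lemma sq_sub_div_two_mul_sq_le_sq_sub_div_two_max {a p q : ℝ} (ha : 0 < a)
    (ha' : a ≤ 1 - a) (hp : a ≤ p) (hmax : max p q ≤ 1 - a) :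
    (p - q) ^ 2 / (2 * p) * (a / (1 - a)) ^ 2 ≤ (p - q) ^ 2 / (2 * max p q) := by
  have h1a : 0 < 1 - a := by linarith
  have hp0 : 0 < p := ha.trans_le hp
  have hkey : a ^ 2 * max p q ≤ p * (1 - a) ^ 2 := by
    nlinarith [mul_le_mul_of_nonneg_left hmax (sq_nonneg a),
      mul_le_mul_of_nonneg_right hp (mul_nonneg ha.le h1a.le),
      mul_le_mul_of_nonneg_left ha' (mul_nonneg hp0.le h1a.le)]
  rw [div_pow, div_mul_div_comm, div_le_div_iff₀ (by positivity)
    (by positivity [hp0.trans_le (le_max_left p q)])]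
  nlinarith [mul_le_mul_of_nonneg_left hkey (sq_nonneg (p - q))]

end

theorem stmt_19 {X : Type*} [MeasurableSpace X] (μ : Measure X)
    (ξ a : ℝ) (hξ : ξ ∈ Set.Ioo (0 : ℝ) 1) (ha : a ∈ Set.Ioo (0 : ℝ) (1/2))
    (π π' : ℝ) (hπ : π ∈ Set.Icc a (1 - a)) (hπ' : π' ∈ Set.Icc a (1 - a))
    (g g' : X → ℝ) (hg : ∀ x, 0 < g x) (hg' : ∀ x, 0 < g' x)
    (hg1 : ∫ x, g x ∂μ = 1) (hg'1 : ∫ x, g' x ∂μ = 1)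
    (hgint : Integrable (fun x => g x * Real.log (g x / g' x)) μ)
    (Dtil : ℝ) (hDtil : Dtil = ∫ x, g x * Real.log (g x / g' x) ∂μ) :
    ziKL μ (ξ * π) (ξ * π') g g' = bernoulliKL (ξ * π) (ξ * π') + ξ * π * Dtil ∧
    ξ * ((π - π') ^ 2 / (2 * π) * (a / (1 - a)) ^ 2 + a * Dtil)
      ≤ ziKL μ (ξ * π) (ξ * π') g g' := by
  obtain ⟨hξ0, hξ1⟩ := hξ
  obtain ⟨ha0, ha2⟩ := ha
  obtain ⟨hπa, hπb⟩ := hπ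
  obtain ⟨hπ'a, hπ'b⟩ := hπ'
  have hπ0 : 0 < π := ha0.trans_le hπa
  have hπ'0 : 0 < π' := ha0.trans_le hπ'a
  have hgi : Integrable g μ := .of_integral_ne_zero (by simp [hg1])
  have hg'i : Integrable g' μ := .of_integral_ne_zero (by simp [hg'1])
  have hdecomp :
      ziKL μ (ξ * π) (ξ * π') g g' = bernoulliKL (ξ * π) (ξ * π') + ξ * π * Dtil := by
    rw [hDtil]
    exact ziKL_eq_bernoulliKL_add (by positivity) (by positivity) (fun x => (hg x).ne')
      (fun x => (hg' x).ne') hg1 hgint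
  have hD : 0 ≤ Dtil := hDtil ▸ integral_mul_log_div_nonneg (fun x => (hg x).le) hg' hgi hg'i
    (hg'1.trans hg1.symm).le
  have hBer : ξ * ((π - π') ^ 2 / (2 * max π π')) ≤ bernoulliKL (ξ * π) (ξ * π') :=
    calc ξ * ((π - π') ^ 2 / (2 * max π π'))
        = (ξ * π - ξ * π') ^ 2 / (2 * max (ξ * π) (ξ * π')) := by
          rw [← mul_sub, ← mul_max_of_nonneg _ _ hξ0.le]; field_simp
      _ ≤ bernoulliKL (ξ * π) (ξ * π') :=
          sq_sub_div_two_max_le_bernoulliKL (mul_pos hξ0 hπ0) (by nlinarith) (mul_pos hξ0 hπ'0)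
            (by nlinarith)
  have hquad := sq_sub_div_two_mul_sq_le_sq_sub_div_two_max ha0 (by linarith) hπa
    (max_le hπb hπ'b)
  refine ⟨hdecomp, ?_⟩
  rw [hdecomp]
  linarith [mul_le_mul_of_nonneg_left hquad hξ0.le,
    mul_le_mul_of_nonneg_right (mul_le_mul_of_nonneg_left hπa hξ0.le) hD]
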